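/- For m a positive integer and probabilities p_0,...,p_m summing to 1, define p(u,v) = p_u * p_{m-v} if u+v ≠ m, and p(u,v) = p_u^2 - p_u if u+v = m. Then for any g, h with 0 ≤ g, h ≤ m and g+h ≥ m, the sum W(g,h) = Σ_{u=0}^{g} Σ_{v=0}^{h} p(u,v) equals Q_{m-h-1} * (1 - Q_g), where Q_u = p_0 + ... + p_u (with Q_{-1} = 0); in particular W(g,h) ≥ 0. -/

import Mathlib

/-!
Summing over `v` first, the off-diagonal terms give `p u` times a tail sum of `p`, and the diagonal
correction `-p u` is picked up exactly when `m - u ≤ h`, i.e. for `m - h ≤ u ≤ g`. Writing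
`Q = ∑_{t < m - h} p t` and `Q_g = ∑_{t ≤ g} p t`, the double sum becomes
`Q_g (1 - Q) - (Q_g - Q) = Q (1 - Q_g)`, a product of two nonnegative factors.
-/

open Finset

section Ring

variable {R : Type*} [CommRing R] (p : ℕ → R)

theorem sum_range_succ_reflect_eq_sub {m h : ℕ} (hh : h ≤ m) :
    ∑ v ∈ range (h + 1), p (m - v) = ∑ t ∈ range (m + 1), p t - ∑ t ∈ range (m - h), p t := by
  rw [range_eq_Ico, sum_Ico_reflect p 0 (by omega), ← sum_Ico_eq_sub p (by omega)]
  congr 2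
  omega

theorem sum_range_ite_add_eq {m u : ℕ} (h : ℕ) (hu : u ≤ m) :
    ∑ v ∈ range (h + 1), (if u + v = m then p u ^ 2 - p u else p u * p (m - v))
      = p u * ∑ v ∈ range (h + 1), p (m - v) - if m ≤ u + h then p u else 0 := by
  have hterm : ∀ v, (if u + v = m then p u ^ 2 - p u else p u * p (m - v))
      = p u * p (m - v) - if m - u = v then p u else 0 := by
    intro v
    by_cases huv : u + v = m
    · rw [if_pos huv, if_pos (by omega), show m - v = u by omega]
      ring
    · rw [if_neg huv, if_neg (by omega), sub_zero]
  simp only [hterm, sum_sub_distrib, mul_sum, sum_ite_eq, mem_range]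
  congr 2
  exact propext (by omega)

theorem sum_range_ite_le_add {m g h : ℕ} (hgh : m ≤ g + h) :
    ∑ u ∈ range (g + 1), (if m ≤ u + h then p u else 0)
      = ∑ t ∈ range (g + 1), p t - ∑ t ∈ range (m - h), p t := by
  rw [← sum_filter, ← sum_Ico_eq_sub p (by omega)]
  congr 1
  ext u
  simp only [mem_filter, mem_range, mem_Ico]
  omega

theorem sum_range_sum_range_ite_add_eq {m g h : ℕ} (hsum : ∑ t ∈ range (m + 1), p t = 1)
    (hg : g ≤ m) (hh : h ≤ m) (hgh : m ≤ g + h) :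
    ∑ u ∈ range (g + 1), ∑ v ∈ range (h + 1),
        (if u + v = m then p u ^ 2 - p u else p u * p (m - v))
      = (∑ t ∈ range (m - h), p t) * (1 - ∑ t ∈ range (g + 1), p t) := by
  rw [sum_congr rfl fun u hu => sum_range_ite_add_eq p h (by grind),
    sum_sub_distrib, ← sum_mul, sum_range_ite_le_add p hgh,
    sum_range_succ_reflect_eq_sub p hh, hsum]
  ring

end Ring

theorem stmt1_general (m : ℕ) (p : ℕ → ℝ) (hp : ∀ u, 0 ≤ p u)
    (hsum : ∑ u ∈ Finset.range (m + 1), p u = 1)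
    (g h : ℕ) (hg : g ≤ m) (hh : h ≤ m) (hgh : m ≤ g + h) :
    (∑ u ∈ Finset.range (g + 1), ∑ v ∈ Finset.range (h + 1),
        (if u + v = m then p u ^ 2 - p u else p u * p (m - v)))
      = (∑ t ∈ Finset.range (m - h), p t) * (1 - ∑ t ∈ Finset.range (g + 1), p t) ∧
    0 ≤ ∑ u ∈ Finset.range (g + 1), ∑ v ∈ Finset.range (h + 1),
        (if u + v = m then p u ^ 2 - p u else p u * p (m - v)) := by
  have hW := sum_range_sum_range_ite_add_eq p hsum hg hh hgh
  refine ⟨hW, ?_⟩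
  rw [hW, ← hsum, ← sum_Ico_eq_sub p (by omega)]
  exact mul_nonneg (sum_nonneg fun t _ => hp t) (sum_nonneg fun t _ => hp t)

theorem stmt1 (m : ℕ) (hm : 1 ≤ m) (p : ℕ → ℝ) (hp : ∀ u, 0 ≤ p u)
    (hsum : ∑ u ∈ Finset.range (m + 1), p u = 1)
    (g h : ℕ) (hg : g ≤ m) (hh : h ≤ m) (hgh : m ≤ g + h) :
    (∑ u ∈ Finset.range (g + 1), ∑ v ∈ Finset.range (h + 1),
        (if u + v = m then p u ^ 2 - p u else p u * p (m - v)))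
      = (∑ t ∈ Finset.range (m - h), p t) * (1 - ∑ t ∈ Finset.range (g + 1), p t) ∧
    0 ≤ ∑ u ∈ Finset.range (g + 1), ∑ v ∈ Finset.range (h + 1),
        (if u + v = m then p u ^ 2 - p u else p u * p (m - v)) :=
  stmt1_general m p hp hsum g h hg hh hgh
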